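/- arXiv:0806.0062 — 5 statements merged into one kernel-verified Lean document; each statement's English description precedes it below -/
import Mathlib

section
/- For a fixed positive integer l, the sum over all m with 1 ≤ m ≤ l and all order-preserving surjections ψ : {1,…,l} → {1,…,m} of the quantity (-1)^{l-m} · ∏_{b=1}^{m} 1/|ψ⁻¹(b)|! equals 1/l!. -/
/-!
A monotone map `Fin l → Fin m` is the sorted list of its values, so monotone maps correspond to
multisets of size `l` on `Fin m`, i.e. to fiber sizes `(d_b)` with `∑ d_b = l`. Hence the inner sum
is the coefficient of `X^l` in `(e^X - 1)^m`; surjectivity is automatic for the nonzero terms since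
`e^X - 1` has no constant term. Up to the sign `(-1)^l`, the sum over `m` is then the coefficient of
`X^l` in `∑_{m ≤ l} (1 - e^X)^m`, which agrees in degree `l` with the geometric series
`1 / (1 - (1 - e^X)) = e^{-X}`, whose coefficient is `(-1)^l / l!`.
-/

open Finset PowerSeries
open scoped Nat

def Fin.monotoneEquivSym (α : Type*) [LinearOrder α] (n : ℕ) :
    {f : Fin n → α // Monotone f} ≃ Sym α n where
  toFun f := Sym.mk (List.ofFn f.1) (by simp)
  invFun s := ⟨fun i => (s.1.sort).get (i.cast (by simp)),
    fun i j hij => (Multiset.pairwise_sort s.1 _).sortedLE.monotone_get hij⟩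
  left_inv f := by
    ext i
    simp [Sym.mk, List.mergeSort_eq_self _ f.2.sortedLE_ofFn.pairwise, Fin.cast]
  right_inv s := by
    apply Subtype.ext
    change ((List.ofFn fun i : Fin n => (s.1.sort).get (i.cast _) : List α) : Multiset α) = s.1
    rw [← List.ofFn_congr (by simp), List.ofFn_get, Multiset.sort_eq]

lemma Fin.count_monotoneEquivSym {α : Type*} [LinearOrder α] {n : ℕ}
    (f : {f : Fin n → α // Monotone f}) (a : α) :
    (Fin.monotoneEquivSym α n f : Multiset α).count a = #{i | f.1 i = a} := by
  change Multiset.count a (List.ofFn f.1 : Multiset α) = _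
  rw [← Fin.univ_val_map, Multiset.count_map, Finset.card_def, Finset.filter_val]
  simp [eq_comm]

theorem PowerSeries.coeff_prod_eq_sum_sym {R ι : Type*} [CommSemiring R] [Fintype ι]
    [DecidableEq ι] (f : ι → R⟦X⟧) (n : ℕ) :
    coeff n (∏ i, f i) = ∑ s : Sym ι n, ∏ i, coeff ((s : Multiset ι).count i) (f i) := by
  rw [coeff_prod]
  refine Finset.sum_bij' (fun P hP => Sym.mk (Finsupp.toMultiset P) ?_)
    (fun s _ => Multiset.toFinsupp (s : Multiset ι)) (by simp) ?_ ?_ ?_ ?_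
  · simpa [Finsupp.card_toMultiset, Finsupp.sum_fintype] using (mem_finsuppAntidiag.1 hP).1
  · intro s _
    refine mem_finsuppAntidiag.2 ⟨?_, subset_univ _⟩
    change ∑ i, (s : Multiset ι).count i = n
    rw [Multiset.sum_count_eq_card (by simp), s.card_coe]
  · intro P _
    simp [Sym.mk]
  · intro s _
    ext
    simp [Sym.mk]
  · intro P _
    simp [Sym.mk]

theorem PowerSeries.coeff_pow_eq_sum_monotone {R : Type*} [CommSemiring R] (f : R⟦X⟧) (l m : ℕ) :
    coeff l (f ^ m) =
      ∑ ψ : Fin l → Fin m, if Monotone ψ then ∏ b, coeff #{i | ψ i = b} f else 0 := by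
  rw [← Finset.sum_filter, Finset.sum_subtype (p := Monotone) _ (fun ψ => by simp),
    ← Fin.prod_const, coeff_prod_eq_sum_sym]
  exact Fintype.sum_equiv (Fin.monotoneEquivSym (Fin m) l).symm _ _ fun s => by
    simp only [← Fin.count_monotoneEquivSym, Equiv.apply_symm_apply]

theorem PowerSeries.coeff_pow_eq_sum_monotone_surjective {R : Type*} [CommSemiring R] {f : R⟦X⟧}
    (hf : constantCoeff f = 0) (l m : ℕ) :
    coeff l (f ^ m) = ∑ ψ : Fin l → Fin m,
      if Monotone ψ ∧ Function.Surjective ψ then ∏ b, coeff #{i | ψ i = b} f else 0 := by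
  rw [coeff_pow_eq_sum_monotone]
  refine Finset.sum_congr rfl fun ψ _ => ?_
  by_cases hψ : Function.Surjective ψ
  · simp [hψ]
  obtain ⟨b, hb⟩ := not_forall.1 hψ
  have : #{i | ψ i = b} = 0 := by simpa [filter_eq_empty_iff] using hb
  have hzero : ∏ b, coeff #{i | ψ i = b} f = 0 :=
    Finset.prod_eq_zero (mem_univ b) (by rw [this, coeff_zero_eq_constantCoeff_apply, hf])
  simp [hψ, hzero]

theorem PowerSeries.coeff_geom_sum_of_mul_eq_one {R : Type*} [CommRing R] {y u : R⟦X⟧}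
    (hy : constantCoeff y = 0) (hu : u * (1 - y) = 1) {n N : ℕ} (hn : n < N) :
    coeff n (∑ i ∈ range N, y ^ i) = coeff n u := by
  have hgeom : ∑ i ∈ range N, y ^ i = u - u * y ^ N := by
    calc ∑ i ∈ range N, y ^ i = u * (1 - y) * ∑ i ∈ range N, y ^ i := by rw [hu, one_mul]
      _ = u * ((∑ i ∈ range N, y ^ i) * (1 - y)) := by ring
      _ = u - u * y ^ N := by rw [geom_sum_mul_neg]; ring
  have hdvd : X ^ N ∣ u * y ^ N := dvd_mul_of_dvd_right (pow_dvd_pow_of_dvd (X_dvd_iff.2 hy) N) u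
  rw [hgeom, map_sub, X_pow_dvd_iff.1 hdvd n hn, sub_zero]

theorem PowerSeries.coeff_sum_range_one_sub_exp_pow (l : ℕ) :
    ∑ m ∈ range (l + 1), coeff l ((1 - exp ℚ) ^ m) = (-1 : ℚ) ^ l / l ! := by
  have hinv : evalNegHom (exp ℚ) * (1 - (1 - exp ℚ)) = 1 := by
    rw [sub_sub_cancel, mul_comm, exp_mul_exp_neg_eq_one]
  rw [← map_sum, coeff_geom_sum_of_mul_eq_one (by simp) hinv (Nat.lt_succ_self l)]
  simp [evalNegHom, coeff_rescale, div_eq_mul_inv]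

theorem PowerSeries.sum_Icc_neg_one_pow_mul_coeff_exp_sub_one_pow {l : ℕ} (hl : 1 ≤ l) :
    ∑ m ∈ Icc 1 l, (-1 : ℚ) ^ (l - m) * coeff l ((exp ℚ - 1) ^ m) = 1 / l ! := by
  have hsign : ∀ m ∈ Icc 1 l,
      (-1 : ℚ) ^ (l - m) * coeff l ((exp ℚ - 1) ^ m) = (-1) ^ l * coeff l ((1 - exp ℚ) ^ m) := by
    intro m hm
    have : (exp ℚ - 1) ^ m = C ((-1 : ℚ) ^ m) * (1 - exp ℚ) ^ m := by
      rw [← neg_sub, neg_pow]; simp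
    rw [this, coeff_C_mul, ← mul_assoc, ← pow_add, Nat.sub_add_cancel (mem_Icc.1 hm).2]
  have hzero : coeff l ((1 - exp ℚ) ^ 0) = 0 := by rw [pow_zero, coeff_one, if_neg (by omega)]
  have hrange : range (l + 1) = insert 0 (Icc 1 l) := by
    ext m
    simp only [mem_range, mem_insert, mem_Icc]
    omega
  have hsum := coeff_sum_range_one_sub_exp_pow l
  rw [hrange, sum_insert (by simp), hzero, zero_add] at hsum
  rw [sum_congr rfl hsign, ← mul_sum, hsum, mul_div_assoc', ← pow_add, ← two_mul, pow_mul]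
  simp

/-- For a fixed positive integer `l`, the sum over all `m` with `1 ≤ m ≤ l` and all
order-preserving surjections `ψ : {1,…,l} → {1,…,m}` of
`(-1)^(l-m) · ∏_b 1/|ψ⁻¹(b)|!` equals `1/l!`. -/
theorem stmt_0 (l : ℕ) (hl : 1 ≤ l) :
    ∑ m ∈ Finset.Icc 1 l,
      ∑ ψ : Fin l → Fin m,
        (if Monotone ψ ∧ Function.Surjective ψ then
          (-1 : ℚ) ^ (l - m) *
            ∏ b : Fin m,
              (1 : ℚ) / (Nat.factorial (Finset.univ.filter fun i => ψ i = b).card)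
        else 0)
      = 1 / (Nat.factorial l : ℚ) := by
  have hcoeff : ∀ n ≠ 0, coeff n (exp ℚ - 1) = (1 / n ! : ℚ) := fun n hn => by simp [coeff_one, hn]
  rw [← sum_Icc_neg_one_pow_mul_coeff_exp_sub_one_pow hl]
  refine sum_congr rfl fun m _ => ?_
  rw [coeff_pow_eq_sum_monotone_surjective (by simp) l m, mul_sum]
  refine sum_congr rfl fun ψ _ => ?_
  split_ifs with hψ
  · refine congrArg _ (prod_congr rfl fun b _ => (hcoeff _ ?_).symm)
    obtain ⟨i, hi⟩ := hψ.2 b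
    exact (card_pos.2 ⟨i, by simp [hi]⟩).ne'
  · rw [mul_zero]
end

section
/- Let d ≥ 1 be an integer and let (N_n)_{n∈ℤ} be a family of rational numbers satisfying N_{n+d} = N_n for all n ∈ ℤ and N_{-n} = N_n for all n ∈ ℤ. Then the generating series Σ_{n≥0} n·N_n·q^n is the Laurent expansion at q = 0 of a rational function f(q) of q satisfying f(1/q) = f(q). -/
/-!
Periodicity makes the second difference of `n ↦ n N_n` at lag `d` vanish beyond `2d`, so
`(1 - q^d)^2 Σ n N_n q^n = Σ_{m ≤ 2d} min(m, 2d - m) N_m q^m`. Both numerator and denominator are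
palindromic of degree `2d` (for the numerator, `N_{2d-m} = N_{-m} = N_m`), so the factors `q^{-2d}`
produced by `q ↦ 1/q` cancel.
-/

/-- A rational function `f ∈ ℚ(q)` is invariant under `q ↔ 1/q` if substituting
`X⁻¹` for the variable (via evaluation into `RatFunc ℚ`) returns `f`. -/
def qInv (f : RatFunc ℚ) : Prop :=
  RatFunc.eval (algebraMap ℚ (RatFunc ℚ)) (RatFunc.X)⁻¹ f = f

open Polynomial

universe u

theorem RatFunc.eval_algebraMap_div {K L : Type u} [Field K] [Field L] (f : K →+* L) (a : L)
    {p q : K[X]} (hq : q ≠ 0) (hqa : q.eval₂ f a ≠ 0) :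
    RatFunc.eval f a (algebraMap K[X] (RatFunc K) p / algebraMap K[X] (RatFunc K) q) =
      p.eval₂ f a / q.eval₂ f a := by
  set x := algebraMap K[X] (RatFunc K) p / algebraMap K[X] (RatFunc K) q
  have hcross : x.num * q = p * x.denom := (RatFunc.num_mul_eq_mul_denom_iff hq).mpr rfl
  obtain ⟨r, hr⟩ := (RatFunc.denom_dvd hq).mpr ⟨p, rfl⟩
  have hdenom : x.denom.eval₂ f a ≠ 0 := fun h ↦ hqa (by rw [hr, eval₂_mul, h, zero_mul])
  rw [RatFunc.eval, div_eq_div_iff hdenom hqa, ← eval₂_mul, ← eval₂_mul, hcross]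

theorem Polynomial.eval₂_inv_mul_pow_of_reflect_eq {R L : Type*} [Semiring R] [Field L]
    (i : R →+* L) {x : L} (hx : x ≠ 0) {n : ℕ} {p : R[X]} (hdeg : p.natDegree ≤ n)
    (hp : p.reflect n = p) : p.eval₂ i x⁻¹ * x ^ n = p.eval₂ i x := by
  let _ := invertibleOfNonzero hx
  simpa only [hp, invOf_eq_inv] using eval₂_reflect_mul_pow i x n p hdeg

theorem RatFunc.eval₂_inv_X_mul_X_pow_of_reflect_eq {K : Type*} [Field K] {n : ℕ} {p : K[X]}
    (hdeg : p.natDegree ≤ n) (hp : p.reflect n = p) :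
    p.eval₂ RatFunc.C RatFunc.X⁻¹ * RatFunc.X ^ n = algebraMap K[X] (RatFunc K) p := by
  rw [eval₂_inv_mul_pow_of_reflect_eq _ RatFunc.X_ne_zero hdeg hp, ← RatFunc.algebraMap_eq_C,
    ← aeval_def, RatFunc.aeval_X_left_eq_algebraMap]

theorem qInv_div_of_reflect_eq {P Q : ℚ[X]} {n : ℕ} (hQ : Q ≠ 0)
    (hPdeg : P.natDegree ≤ n) (hQdeg : Q.natDegree ≤ n)
    (hPr : P.reflect n = P) (hQr : Q.reflect n = Q) :
    qInv (algebraMap ℚ[X] (RatFunc ℚ) P / algebraMap ℚ[X] (RatFunc ℚ) Q) := by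
  have hQX := RatFunc.eval₂_inv_X_mul_X_pow_of_reflect_eq hQdeg hQr
  have hQa : Q.eval₂ RatFunc.C RatFunc.X⁻¹ ≠ 0 :=
    left_ne_zero_of_mul (hQX ▸ RatFunc.algebraMap_ne_zero hQ)
  rw [qInv, RingHom.ext_rat (algebraMap ℚ (RatFunc ℚ)) RatFunc.C,
    RatFunc.eval_algebraMap_div _ _ hQ hQa,
    ← mul_div_mul_right _ _ (pow_ne_zero n RatFunc.X_ne_zero), hQX,
    RatFunc.eval₂_inv_X_mul_X_pow_of_reflect_eq hPdeg hPr]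

theorem reflect_one_sub_X_pow_sq {R : Type*} [CommRing R] (d : ℕ) :
    ((1 - X ^ d : R[X]) ^ 2).reflect (2 * d) = (1 - X ^ d) ^ 2 := by
  have hdeg : (1 - X ^ d : R[X]).natDegree ≤ d := by compute_degree
  rw [two_mul, sq, reflect_mul _ _ hdeg hdeg, reflect_sub, reflect_one, reflect_monomial,
    revAt_le le_rfl, Nat.sub_self, pow_zero]
  ring

theorem natDegree_one_sub_X_pow_sq_le {R : Type*} [CommRing R] (d : ℕ) :
    ((1 - X ^ d : R[X]) ^ 2).natDegree ≤ 2 * d := by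
  compute_degree

theorem one_sub_X_pow_sq_ne_zero {R : Type*} [CommRing R] [IsDomain R] {d : ℕ} (hd : d ≠ 0) :
    (1 - X ^ d : R[X]) ^ 2 ≠ 0 := by
  rw [← neg_sub, ← C_1]
  exact pow_ne_zero _ (neg_ne_zero.mpr (X_pow_sub_C_ne_zero (Nat.pos_of_ne_zero hd) 1))

theorem RatFunc.coe_div_eq_of_mul_eq {F : Type*} [Field F] {P Q : F[X]} {S : PowerSeries F}
    (hQ : Q ≠ 0) (h : (Q : PowerSeries F) * S = P) :
    ((algebraMap F[X] (RatFunc F) P / algebraMap F[X] (RatFunc F) Q : RatFunc F) :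
      LaurentSeries F) = (S : LaurentSeries F) := by
  have hQL : ((Q : PowerSeries F) : LaurentSeries F) ≠ 0 :=
    (map_ne_zero_iff _ (Polynomial.algebraMap_hahnSeries_injective (Γ := ℤ) (R := F))).mpr hQ
  rw [map_div₀, ← RatFunc.coePolynomial_eq_algebraMap, ← RatFunc.coePolynomial_eq_algebraMap,
    ← RatFunc.coe_coe, ← RatFunc.coe_coe, div_eq_iff hQL, ← map_mul, mul_comm, h]

section TentPoly

variable {R : Type*} [CommRing R]

-- Truncated subtraction makes the weight `min m (2 * d - m)` vanish for `m ≥ 2 * d` as well.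
noncomputable def tentPoly (d : ℕ) (a : ℕ → R) : R[X] :=
  ∑ m ∈ Finset.range (2 * d + 1), C ((min m (2 * d - m) : ℕ) * a m) * X ^ m

theorem coeff_tentPoly (d : ℕ) (a : ℕ → R) (m : ℕ) :
    (tentPoly d a).coeff m = (min m (2 * d - m) : ℕ) * a m := by
  simp only [tentPoly, finsetSum_coeff, coeff_C_mul_X_pow, Finset.sum_ite_eq, Finset.mem_range]
  split_ifs with hm
  · rfl
  · rw [show min m (2 * d - m) = 0 by omega, Nat.cast_zero, zero_mul]

theorem natDegree_tentPoly_le (d : ℕ) (a : ℕ → R) : (tentPoly d a).natDegree ≤ 2 * d := by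
  refine natDegree_le_iff_coeff_eq_zero.mpr fun m hm ↦ ?_
  rw [coeff_tentPoly, show min m (2 * d - m) = 0 by omega, Nat.cast_zero, zero_mul]

theorem reflect_tentPoly {d : ℕ} {a : ℕ → R} (ha : ∀ m ≤ 2 * d, a (2 * d - m) = a m) :
    (tentPoly d a).reflect (2 * d) = tentPoly d a := by
  ext m
  rw [coeff_reflect]
  rcases le_or_gt m (2 * d) with hm | hm
  · rw [revAt_le hm, coeff_tentPoly, coeff_tentPoly, ha m hm,
      show min (2 * d - m) (2 * d - (2 * d - m)) = min m (2 * d - m) by omega]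
  · rw [revAt_eq_self_of_lt hm]

theorem natCast_min_two_mul_sub_eq (d m : ℕ) :
    ((min m (2 * d - m) : ℕ) : ℤ) =
      m - 2 * (if d ≤ m then ((m - d : ℕ) : ℤ) else 0) +
        (if 2 * d ≤ m then ((m - 2 * d : ℕ) : ℤ) else 0) := by
  split_ifs <;> omega

theorem one_sub_X_pow_sq_mul_mk {d : ℕ} {a : ℕ → R} (ha : Function.Periodic a d) :
    ((1 - PowerSeries.X ^ d) ^ 2 : PowerSeries R) * PowerSeries.mk (fun n ↦ (n : R) * a n) =
      tentPoly d a := by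
  set S := PowerSeries.mk (fun n ↦ (n : R) * a n)
  have hsub : ∀ k m, k * d ≤ m → a (m - k * d) = a m := fun k m h ↦ by
    rw [← ha.nat_mul k (m - k * d), Nat.cast_id, Nat.sub_add_cancel h]
  have expand : ((1 - PowerSeries.X ^ d) ^ 2 : PowerSeries R) * S =
      S - 2 • (PowerSeries.X ^ d * S) + PowerSeries.X ^ (2 * d) * S := by ring
  ext m
  rw [expand, Polynomial.coeff_coe, coeff_tentPoly]
  simp only [map_add, map_sub, map_nsmul, PowerSeries.coeff_X_pow_mul', S, PowerSeries.coeff_mk]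
  have hd : d ≤ m → a (m - d) = a m := by simpa using hsub 1 m
  calc _ = ((m - 2 * (if d ≤ m then ((m - d : ℕ) : ℤ) else 0) +
          (if 2 * d ≤ m then ((m - 2 * d : ℕ) : ℤ) else 0) : ℤ) : R) * a m := by
        split_ifs with h1 h2 <;> push_cast [hd, hsub 2 m, *] <;> ring
    _ = _ := by rw [← natCast_min_two_mul_sub_eq, Int.cast_natCast]

end TentPoly

/-- If `(N_n)_{n∈ℤ}` are rationals with `N_{n+d} = N_n` and `N_{-n} = N_n`, then the
generating series `Σ_{n≥0} n·N_n·q^n` is the Laurent expansion at `q = 0` of a rational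
function `f(q)` with `f(1/q) = f(q)`. -/
theorem stmt_3 (d : ℕ) (hd : 1 ≤ d) (N : ℤ → ℚ)
    (hper : ∀ n : ℤ, N (n + d) = N n) (hsym : ∀ n : ℤ, N (-n) = N n) :
    ∃ f : RatFunc ℚ,
      (∀ n : ℤ, (f : LaurentSeries ℚ).coeff n = if 0 ≤ n then (n : ℚ) * N n else 0) ∧
      qInv f := by
  set a : ℕ → ℚ := fun m ↦ N m
  have ha_per : Function.Periodic a d := fun m ↦ by simpa [a] using hper m
  have ha_symm : ∀ m ≤ 2 * d, a (2 * d - m) = a m := fun m hm ↦ by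
    simp only [a, Nat.cast_sub hm]
    push_cast
    exact (Function.Periodic.nat_mul hper 2).sub_eq'.trans (hsym m)
  have hQ : ((1 - X ^ d) ^ 2 : ℚ[X]) ≠ 0 := one_sub_X_pow_sq_ne_zero (by omega)
  have hS : (((1 - X ^ d) ^ 2 : ℚ[X]) : PowerSeries ℚ) * PowerSeries.mk (fun n ↦ (n : ℚ) * a n) =
      tentPoly d a := by
    push_cast
    exact one_sub_X_pow_sq_mul_mk ha_per
  refine ⟨algebraMap _ _ (tentPoly d a) / algebraMap _ _ ((1 - X ^ d) ^ 2), fun n ↦ ?_,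
    qInv_div_of_reflect_eq hQ (natDegree_tentPoly_le d a) (natDegree_one_sub_X_pow_sq_le d)
      (reflect_tentPoly ha_symm) (reflect_one_sub_X_pow_sq d)⟩
  rw [RatFunc.coe_div_eq_of_mul_eq hQ hS, PowerSeries.coeff_coe]
  rcases lt_or_ge n 0 with hn | hn
  · simp [hn, not_le.mpr hn]
  · lift n to ℕ using hn
    simp [a]
end

section
/- Let A be an abelian category, T a totally ordered set, and Z : C(A) → T a weak stability function. If an object E of A admits a filtration 0 = E₀ ⊂ E₁ ⊂ ⋯ ⊂ E_n = E with subquotients F_i = E_i/E_{i-1} being Z-semistable and Z(F₁) ≻ Z(F₂) ≻ ⋯ ≻ Z(F_n), then this filtration (a Harder–Narasimhan filtration) is unique up to isomorphism. -/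
open CategoryTheory CategoryTheory.Limits

universe v u

/-!
Nonzero morphisms between semistable objects do not decrease `Z`: factoring `g : Q ⟶ R`
through its image, the see-saw property gives `Z Q ≤ Z (coimage g) = Z (image g) ≤ Z R`.
If `j` is least with `F₁ ≤ F'_{j+1}`, the inclusion induces a nonzero map
`F₁ ⟶ F'_{j+1}/F'_j`, so `Z F₁ ≤ Z (F'_{j+1}/F'_j) ≤ Z F'₁`, strictly if `j > 0`.
By symmetry `Z F₁ = Z F'₁`, hence `j = 0` both ways and `F₁ = F'₁`; induct on the tails.
-/

/-- The `i`-th subquotient `E_{i+1}/E_i` of a strictly increasing filtration of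
subobjects of an object of an abelian category. -/
noncomputable def hnSubquot {C : Type u} [Category.{v} C] [Abelian C] {E : C} {n : ℕ}
    (F : Fin (n + 1) → Subobject E) (hF : StrictMono F) (i : Fin n) : C :=
  cokernel (Subobject.ofLE _ _ (hF (Fin.castSucc_lt_succ : Fin.castSucc i < Fin.succ i)).le)

theorem Fin.exists_not_castSucc_and_succ {n : ℕ} {p : Fin (n + 1) → Prop}
    (h0 : ¬ p 0) (hlast : p (Fin.last n)) : ∃ i : Fin n, ¬ p i.castSucc ∧ p i.succ := by
  by_contra! h
  exact Fin.induction (motive := fun i => ¬ p i) h0 h (Fin.last n) hlast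

theorem StrictMono.eq_zero_iff_apply_zero_eq_apply_last {α : Type*} [Preorder α] {n : ℕ}
    {F : Fin (n + 1) → α} (hF : StrictMono F) : n = 0 ↔ F 0 = F (Fin.last n) :=
  ⟨fun h => by subst h; rfl, fun h => Fin.last_eq_zero_iff.mp (hF.injective h).symm⟩

namespace CategoryTheory.Subobject

variable {C : Type u} [Category.{v} C] [Abelian C]

theorem le_of_ofLE_comp_cokernel_π_eq_zero {E : C} {A P Q : Subobject E} (hAQ : A ≤ Q)
    (hPQ : P ≤ Q) (w : ofLE A Q hAQ ≫ cokernel.π (ofLE P Q hPQ) = 0) : A ≤ P := by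
  refine le_of_comm (Abelian.monoLift _ (ofLE A Q hAQ) w) ?_
  rw [← ofLE_arrow hPQ, ← Category.assoc, Abelian.monoLift_comp, ofLE_arrow]

end CategoryTheory.Subobject

namespace HarderNarasimhan

variable {C : Type u} [Category.{v} C] [Abelian C] {T : Type*} [LinearOrder T]

def IsoInvariant (Z : C → T) : Prop :=
  ∀ X Y : C, (X ≅ Y) → Z X = Z Y

def SeeSaw (Z : C → T) : Prop :=
  ∀ (X : C) (S : Subobject X), S ≠ ⊥ → S ≠ ⊤ →
    (Z (S : C) ≤ Z X ∧ Z X ≤ Z (cokernel S.arrow)) ∨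
    (Z (cokernel S.arrow) ≤ Z X ∧ Z X ≤ Z (S : C))

def Semistable (Z : C → T) (X : C) : Prop :=
  ∀ S : Subobject X, S ≠ ⊥ → S ≠ ⊤ → Z (S : C) ≤ Z (cokernel S.arrow)

variable {Z : C → T}

theorem Semistable.le_of_ne_bot (hiso : IsoInvariant Z) (hZ : SeeSaw Z)
    {X : C} (hX : Semistable Z X) {S : Subobject X} (hS : S ≠ ⊥) :
    Z (S : C) ≤ Z X := by
  by_cases htop : S = ⊤
  · have : IsIso S.arrow := (Subobject.isIso_arrow_iff_eq_top S).2 htop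
    exact (hiso _ _ (asIso S.arrow)).le
  · rcases hZ X S hS htop with h | h
    · exact h.1
    · exact (hX S hS htop).trans h.1

theorem Semistable.le_cokernel_of_ne_top (hiso : IsoInvariant Z) (hZ : SeeSaw Z)
    {X : C} (hX : Semistable Z X) {S : Subobject X}
    (hS : S ≠ ⊤) : Z X ≤ Z (cokernel S.arrow) := by
  by_cases hbot : S = ⊥
  · subst hbot
    have := cokernel.π_of_zero (Subobject.bot_arrow (B := X))
    exact (hiso _ _ (asIso (cokernel.π _))).le
  · rcases hZ X S hbot hS with h | h
    · exact h.2
    · exact h.2.trans (hX S hbot hS)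

theorem image_le_of_semistable (hiso : IsoInvariant Z) (hZ : SeeSaw Z)
    {Q R : C} {g : Q ⟶ R} (hg : g ≠ 0) (hR : Semistable Z R) :
    Z (image g) ≤ Z R := by
  have hbot : imageSubobject g ≠ ⊥ := fun h => hg <| by
    have harrow : (imageSubobject g).arrow = 0 := by rw [h]; exact Subobject.bot_arrow
    rw [← imageSubobject_arrow_comp g, harrow, comp_zero]
  rw [hiso _ _ (imageSubobjectIso g).symm]
  exact hR.le_of_ne_bot hiso hZ hbot

theorem le_image_of_semistable (hiso : IsoInvariant Z) (hZ : SeeSaw Z)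
    {Q R : C} {g : Q ⟶ R} (hg : g ≠ 0) (hQ : Semistable Z Q) :
    Z Q ≤ Z (image g) := by
  have htop : kernelSubobject g ≠ ⊤ := fun h => hg <| by
    have : IsIso (kernel.ι g) := (Subobject.isIso_iff_mk_eq_top _).mpr h
    rw [← cancel_epi (kernel.ι g), kernel.condition, comp_zero]
  calc Z Q ≤ Z (cokernel (kernelSubobject g).arrow) := hQ.le_cokernel_of_ne_top hiso hZ htop
    _ = Z (Abelian.coimage g) :=
      hiso _ _ (by rw [← kernelSubobject_arrow g]; exact cokernelEpiComp _ _)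
    _ = Z (image g) := hiso _ _ (Abelian.coimageIsoImage' g)

theorem Semistable.le_of_ne_zero (hiso : IsoInvariant Z) (hZ : SeeSaw Z)
    {Q R : C} (hQ : Semistable Z Q) (hR : Semistable Z R)
    {g : Q ⟶ R} (hg : g ≠ 0) : Z Q ≤ Z R :=
  (le_image_of_semistable hiso hZ hg hQ).trans (image_le_of_semistable hiso hZ hg hR)

theorem subquotient_le_subquotient_of_not_le (hiso : IsoInvariant Z) (hZ : SeeSaw Z)
    {E : C} {B A P Q : Subobject E} (hBA : B ≤ A)
    (hPQ : P ≤ Q) (hBP : B ≤ P) (hAQ : A ≤ Q) (hAP : ¬ A ≤ P)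
    (hAB : Semistable Z (cokernel (Subobject.ofLE B A hBA)))
    (hQP : Semistable Z (cokernel (Subobject.ofLE P Q hPQ))) :
    Z (cokernel (Subobject.ofLE B A hBA)) ≤ Z (cokernel (Subobject.ofLE P Q hPQ)) := by
  have w : Subobject.ofLE B A hBA ≫
      (Subobject.ofLE A Q hAQ ≫ cokernel.π (Subobject.ofLE P Q hPQ)) = 0 := by
    rw [← Category.assoc, Subobject.ofLE_comp_ofLE,
      ← Subobject.ofLE_comp_ofLE B P Q hBP hPQ, Category.assoc, cokernel.condition, comp_zero]
  refine hAB.le_of_ne_zero hiso hZ hQP (g := cokernel.desc _ _ w) fun h => hAP ?_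
  refine Subobject.le_of_ofLE_comp_cokernel_π_eq_zero hAQ hPQ ?_
  rw [← cokernel.π_desc _ _ w, h, comp_zero]

theorem first_subquotient_le (hiso : IsoInvariant Z) (hZ : SeeSaw Z)
    {E : C} {m m' : ℕ}
    {F : Fin (m + 2) → Subobject E} {F' : Fin (m' + 2) → Subobject E}
    (hF : StrictMono F) (hF' : StrictMono F')
    (h0 : F 0 = F' 0) (htop : F (Fin.last _) = F' (Fin.last _))
    (hss : Semistable Z (hnSubquot F hF 0)) (hss' : ∀ i, Semistable Z (hnSubquot F' hF' i))
    (hanti' : StrictAnti fun i => Z (hnSubquot F' hF' i)) :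
    Z (hnSubquot F hF 0) ≤ Z (hnSubquot F' hF' 0) ∧
      (F 1 ≤ F' 1 ∨ Z (hnSubquot F hF 0) < Z (hnSubquot F' hF' 0)) := by
  obtain ⟨j, hnle, hle⟩ := Fin.exists_not_castSucc_and_succ (p := fun k => F 1 ≤ F' k)
    (fun h => (hF Fin.zero_lt_one).not_ge (h0 ▸ h)) (htop ▸ hF.monotone (Fin.le_last 1))
  have hj : Z (hnSubquot F hF 0) ≤ Z (hnSubquot F' hF' j) :=
    subquotient_le_subquotient_of_not_le hiso hZ _ _ (h0 ▸ hF'.monotone (Fin.zero_le _))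
      hle hnle hss (hss' j)
  rcases eq_or_ne j 0 with rfl | hj0
  · exact ⟨hj, Or.inl hle⟩
  · have hlt := hanti' (Fin.pos_iff_ne_zero.2 hj0)
    exact ⟨hj.trans hlt.le, Or.inr (hj.trans_lt hlt)⟩

theorem filtration_eq_of_semistable_strictAnti (hiso : IsoInvariant Z) (hZ : SeeSaw Z)
    {E : C} {n n' : ℕ} {F : Fin (n + 1) → Subobject E} {F' : Fin (n' + 1) → Subobject E}
    (hF : StrictMono F) (hF' : StrictMono F')
    (h0 : F 0 = F' 0) (htop : F (Fin.last n) = F' (Fin.last n'))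
    (hss : ∀ i, Semistable Z (hnSubquot F hF i)) (hss' : ∀ i, Semistable Z (hnSubquot F' hF' i))
    (hanti : StrictAnti fun i => Z (hnSubquot F hF i))
    (hanti' : StrictAnti fun i => Z (hnSubquot F' hF' i)) :
    n = n' ∧ ∀ (i : ℕ) (h : i < n + 1) (h' : i < n' + 1), F ⟨i, h⟩ = F' ⟨i, h'⟩ := by
  induction n generalizing n' with
  | zero =>
    obtain rfl : n' = 0 := hF'.eq_zero_iff_apply_zero_eq_apply_last.2 (h0 ▸ htop)
    refine ⟨rfl, fun i h _ => ?_⟩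
    obtain rfl : i = 0 := by omega
    exact h0
  | succ m ih =>
    obtain ⟨m', rfl⟩ : ∃ m', n' = m' + 1 := Nat.exists_eq_succ_of_ne_zero fun hn' =>
      m.succ_ne_zero (hF.eq_zero_iff_apply_zero_eq_apply_last.2
        (h0.trans ((hF'.eq_zero_iff_apply_zero_eq_apply_last.1 hn').trans htop.symm)))
    obtain ⟨hle, hF1⟩ := first_subquotient_le hiso hZ hF hF' h0 htop (hss 0) hss' hanti'
    obtain ⟨hle', hF'1⟩ := first_subquotient_le hiso hZ hF' hF h0.symm htop.symm (hss' 0) hss hanti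
    have h1 : F 1 = F' 1 :=
      le_antisymm (hF1.resolve_right hle'.not_gt) (hF'1.resolve_right hle.not_gt)
    obtain ⟨rfl, htail⟩ := ih (hF.comp Fin.strictMono_succ) (hF'.comp Fin.strictMono_succ) h1 htop
      (fun i => hss i.succ) (fun i => hss' i.succ)
      (hanti.comp_strictMono Fin.strictMono_succ) (hanti'.comp_strictMono Fin.strictMono_succ)
    refine ⟨rfl, fun i h h' => ?_⟩
    rcases i with _ | i
    · exact h0
    · exact htail i (by omega) (by omega)

end HarderNarasimhan

/-- Uniqueness of Harder–Narasimhan filtrations: if `Z` is a weak stability function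
(see-saw property) on an abelian category, invariant under isomorphism, and an object
`E` admits two filtrations with `Z`-semistable subquotients of strictly decreasing
`Z`-values, then the two filtrations agree. -/
theorem stmt_8 {C : Type u} [Category.{v} C] [Abelian C]
    {T : Type*} [LinearOrder T] (Z : C → T)
    -- Z is constant on isomorphism classes
    (hiso : ∀ X Y : C, (X ≅ Y) → Z X = Z Y)
    -- see-saw (weak stability function) property
    (hseesaw : ∀ (X : C) (S : Subobject X), S ≠ ⊥ → S ≠ ⊤ →
      (Z (S : C) ≤ Z X ∧ Z X ≤ Z (cokernel S.arrow)) ∨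
      (Z (cokernel S.arrow) ≤ Z X ∧ Z X ≤ Z (S : C)))
    -- the semistability predicate determined by Z
    (ss : C → Prop)
    (hss : ∀ X : C, ss X ↔
      ∀ S : Subobject X, S ≠ ⊥ → S ≠ ⊤ → Z (S : C) ≤ Z (cokernel S.arrow))
    (E : C) (n n' : ℕ)
    (F : Fin (n + 1) → Subobject E) (F' : Fin (n' + 1) → Subobject E)
    (hFmono : StrictMono F) (hF'mono : StrictMono F')
    (hF0 : F 0 = ⊥) (hFtop : F (Fin.last n) = ⊤)
    (hF'0 : F' 0 = ⊥) (hF'top : F' (Fin.last n') = ⊤)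
    -- subquotients are Z-semistable
    (hssF : ∀ i : Fin n, ss (hnSubquot F hFmono i))
    (hssF' : ∀ i : Fin n', ss (hnSubquot F' hF'mono i))
    -- Z-values of subquotients strictly decrease
    (hdec : ∀ i j : Fin n, i < j →
      Z (hnSubquot F hFmono j) < Z (hnSubquot F hFmono i))
    (hdec' : ∀ i j : Fin n', i < j →
      Z (hnSubquot F' hF'mono j) < Z (hnSubquot F' hF'mono i)) :
    n = n' ∧ ∀ (i : ℕ) (h : i < n + 1) (h' : i < n' + 1), F ⟨i, h⟩ = F' ⟨i, h'⟩ :=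
  HarderNarasimhan.filtration_eq_of_semistable_strictAnti hiso hseesaw hFmono hF'mono
    (hF0.trans hF'0.symm) (hFtop.trans hF'top.symm)
    (fun i => (hss _).1 (hssF i)) (fun i => (hss _).1 (hssF' i)) hdec hdec'
end

section
/- With Z, Z' as in (simplicity) [Z corresponding to σ = kω + iω with k < 0 and Z' to iω], take classes v₁, …, v_l all of Chern character (0, 0, β_i, n_i) with β_i effective nonzero and n_i ∈ ℤ, and set μ_i = n_i/(ω·β_i). If for all i, j the implications [Z(v_i) ⪯ Z(v_j) iff μ_i ≤ μ_j iff Z'(v_i) ⪯ Z'(v_j)] hold, then the Joyce transformation coefficient S({v₁,…,v_l}, Z, Z') equals 1 if l = 1 and 0 if l ≥ 2. -/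
open scoped Classical

/-!
Let `T` be the slope of the total class. Comparing a prefix with the complementary suffix is the
same as comparing the prefix with `T`, i.e. reading the sign of the excess
`E k = ∑_{j<k} b_j (μ_j - T)`, and `E l = 0`. If every position satisfied one of Joyce's two
conditions, then by induction `E (k+1) > 0 ↔ μ_k > T`, strictly on both sides once `k ≥ 1`:
condition (1) at `k` forces `E (k+1) > 0` and lets `μ` grow, condition (2) forces `E (k+1) ≤ 0`
and makes `μ` drop. Hence `E l ≠ 0` as soon as `l ≥ 2`, a contradiction.
-/

open Finset

def excess {K : Type*} [Ring K] (w μ : ℕ → K) (T : K) (k : ℕ) : K :=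
  ∑ j ∈ range k, w j * (μ j - T)

lemma excess_succ {K : Type*} [Ring K] (w μ : ℕ → K) (T : K) (k : ℕ) :
    excess w μ T (k + 1) = excess w μ T k + w k * (μ k - T) :=
  sum_range_succ _ _

lemma excess_div_eq {K : Type*} [Field K] {nn b : ℕ → K} {k : ℕ} (hb : ∀ i < k, b i ≠ 0)
    (T : K) :
    excess b (fun i => nn i / b i) T k = ∑ i ∈ range k, nn i - T * ∑ i ∈ range k, b i := by
  rw [excess, mul_sum, ← sum_sub_distrib]
  refine sum_congr rfl fun i hi => ?_
  have := hb i (mem_range.mp hi)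
  field_simp

section Excess

variable {K : Type*} [Field K] [LinearOrder K] [IsStrictOrderedRing K]

lemma div_lt_div_iff_pos_sub_add_div_add_mul {a b c d : K} (hb : 0 < b) (hd : 0 < d) :
    c / d < a / b ↔ 0 < a - (a + c) / (b + d) * b := by
  rw [div_lt_div_iff₀ hd hb, sub_pos, div_mul_eq_mul_div, div_lt_iff₀ (add_pos hb hd)]
  constructor <;> intro h <;> linarith

variable {w μ : ℕ → K} {T : K}

lemma excess_one_pos_iff (hw : 0 < w 0) : 0 < excess w μ T 1 ↔ T < μ 0 := by
  rw [excess_succ, excess, sum_range_zero, zero_add, mul_pos_iff_of_pos_left hw, sub_pos]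

lemma excess_sign_step {k : ℕ} (hw : 0 < w (k + 1))
    (hk : 0 < excess w μ T (k + 1) ↔ T < μ k)
    (halt : (μ k ≤ μ (k + 1) ∧ 0 < excess w μ T (k + 1)) ∨
      (μ (k + 1) < μ k ∧ excess w μ T (k + 1) ≤ 0)) :
    (0 < excess w μ T (k + 2) ∧ T < μ (k + 1)) ∨
      (excess w μ T (k + 2) < 0 ∧ μ (k + 1) < T) := by
  rw [excess_succ w μ T (k + 1)]
  rcases halt with ⟨hμ, hE⟩ | ⟨hμ, hE⟩
  · have hT : T < μ (k + 1) := (hk.mp hE).trans_le hμ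
    exact .inl ⟨add_pos hE (mul_pos hw (sub_pos.mpr hT)), hT⟩
  · have hT : μ (k + 1) < T := hμ.trans_le (not_lt.mp (mt hk.mpr (not_lt.mpr hE)))
    exact .inr ⟨add_neg_of_nonpos_of_neg hE (mul_neg_of_pos_of_neg hw (sub_neg.mpr hT)), hT⟩

theorem not_forall_alternates {l : ℕ} (hl : 2 ≤ l) (hw : ∀ i < l, 0 < w i)
    (hE : excess w μ T l = 0) :
    ¬ ∀ i < l - 1, (μ i ≤ μ (i + 1) ∧ 0 < excess w μ T (i + 1)) ∨
      (μ (i + 1) < μ i ∧ excess w μ T (i + 1) ≤ 0) := by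
  intro halt
  have hsign : ∀ k < l, (0 < excess w μ T (k + 1) ↔ T < μ k) := by
    intro k hk
    induction k with
    | zero => exact excess_one_pos_iff (hw 0 hk)
    | succ k ih =>
      rcases excess_sign_step (hw _ hk) (ih (by omega)) (halt k (by omega)) with h | h
      · exact iff_of_true h.1 h.2
      · exact iff_of_false h.1.not_gt h.2.not_gt
  obtain ⟨m, rfl⟩ : ∃ m, l = m + 2 := ⟨l - 2, by omega⟩
  rcases excess_sign_step (hw _ (by omega)) (hsign m (by omega)) (halt m (by omega)) with h | h
  · exact h.1.ne' hE
  · exact h.1.ne hE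

lemma suffix_slope_lt_prefix_slope_iff {nn b : ℕ → K} {k l : ℕ} (hb : ∀ i < l, 0 < b i)
    (hk : 0 < k) (hkl : k < l) :
    (∑ i ∈ Ico k l, nn i) / (∑ i ∈ Ico k l, b i) <
        (∑ i ∈ range k, nn i) / (∑ i ∈ range k, b i) ↔
      0 < excess b (fun i => nn i / b i) ((∑ i ∈ range l, nn i) / (∑ i ∈ range l, b i)) k := by
  have hP : 0 < ∑ i ∈ range k, b i :=
    sum_pos (fun i hi => hb i ((mem_range.mp hi).trans hkl)) ⟨0, mem_range.mpr hk⟩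
  have hQ : 0 < ∑ i ∈ Ico k l, b i :=
    sum_pos (fun i hi => hb i (mem_Ico.mp hi).2) ⟨k, mem_Ico.mpr ⟨le_rfl, hkl⟩⟩
  rw [div_lt_div_iff_pos_sub_add_div_add_mul hP hQ, sum_range_add_sum_Ico _ hkl.le,
    sum_range_add_sum_Ico _ hkl.le, excess_div_eq fun i hi => (hb i (hi.trans hkl)).ne', mul_comm]

end Excess

theorem stmt_12_general (l : ℕ) (b nn : ℕ → ℚ) (hb : ∀ i < l, 0 < b i) :
    let μ : ℕ → ℚ := fun i => nn i / b i
    let slope : Finset ℕ → ℚ := fun s => (∑ i ∈ s, nn i) / (∑ i ∈ s, b i)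
    -- condition (1): Z(v_i) ⪯ Z(v_{i+1}) and Z'(v₁+⋯+v_i) ≻ Z'(v_{i+1}+⋯+v_l)
    let cond1 : ℕ → Prop := fun i =>
      μ i ≤ μ (i + 1) ∧ slope (Finset.Ico (i + 1) l) < slope (Finset.range (i + 1))
    -- condition (2): Z(v_i) ≻ Z(v_{i+1}) and Z'(v₁+⋯+v_i) ⪯ Z'(v_{i+1}+⋯+v_l)
    let cond2 : ℕ → Prop := fun i =>
      μ (i + 1) < μ i ∧ slope (Finset.range (i + 1)) ≤ slope (Finset.Ico (i + 1) l)
    let S : ℚ :=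
      if ∀ i < l - 1, cond1 i ∨ cond2 i then
        (-1 : ℚ) ^ ((Finset.range (l - 1)).filter cond1).card
      else 0
    (l = 1 → S = 1) ∧ (2 ≤ l → S = 0) := by
  intro μ slope cond1 cond2 S
  refine ⟨fun h => by simp [S, h], fun hl => ?_⟩
  set T := slope (range l)
  have hexcess : excess b μ T l = 0 := by
    have hP : ∑ i ∈ range l, b i ≠ 0 :=
      (sum_pos (fun i hi => hb i (mem_range.mp hi)) ⟨0, mem_range.mpr (by omega)⟩).ne'
    rw [excess_div_eq fun i hi => (hb i hi).ne', div_mul_cancel₀ _ hP, sub_self]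
  have hnot : ¬ ∀ i < l - 1, cond1 i ∨ cond2 i := by
    intro halt
    refine not_forall_alternates hl hb hexcess fun i hi => ?_
    have hiff := suffix_slope_lt_prefix_slope_iff (nn := nn) hb i.succ_pos (by omega : i + 1 < l)
    rcases halt i hi with ⟨hμ, hslope⟩ | ⟨hμ, hslope⟩
    · exact .inl ⟨hμ, hiff.mp hslope⟩
    · exact .inr ⟨hμ, not_lt.mp (mt hiff.mpr hslope.not_gt)⟩
  simp only [S, if_neg hnot]

/-- Joyce's coefficient `S({v₁,…,v_l}, Z, Z')` for classes `v_i` of pure one-dimensional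
sheaves `(0,0,β_i,n_i)` with slopes `μ_i = n_i/(ω·β_i)`, when both `Z` and `Z'` induce
the slope ordering (as for the stability conditions of Lemma 4.10 of Toda's paper):
`S = 1` if `l = 1` and `S = 0` if `l ≥ 2`. Here the prefix/suffix comparisons of
`Z'` are given by the weighted-average slopes. -/
theorem stmt_12 (l : ℕ) (hl : 1 ≤ l) (b nn : ℕ → ℚ) (hb : ∀ i < l, 0 < b i) :
    let μ : ℕ → ℚ := fun i => nn i / b i
    let slope : Finset ℕ → ℚ := fun s => (∑ i ∈ s, nn i) / (∑ i ∈ s, b i)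
    -- condition (1): Z(v_i) ⪯ Z(v_{i+1}) and Z'(v₁+⋯+v_i) ≻ Z'(v_{i+1}+⋯+v_l)
    let cond1 : ℕ → Prop := fun i =>
      μ i ≤ μ (i + 1) ∧ slope (Finset.Ico (i + 1) l) < slope (Finset.range (i + 1))
    -- condition (2): Z(v_i) ≻ Z(v_{i+1}) and Z'(v₁+⋯+v_i) ⪯ Z'(v_{i+1}+⋯+v_l)
    let cond2 : ℕ → Prop := fun i =>
      μ (i + 1) < μ i ∧ slope (Finset.range (i + 1)) ≤ slope (Finset.Ico (i + 1) l)
    let S : ℚ :=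
      if ∀ i < l - 1, cond1 i ∨ cond2 i then
        (-1 : ℚ) ^ ((Finset.range (l - 1)).filter cond1).card
      else 0
    (l = 1 → S = 1) ∧ (2 ≤ l → S = 0) :=
  stmt_12_general l b nn hb
end

section
/- Abstract version of Lemma 4.11: Let μ₁, …, μ_l be rational numbers with a distinguished index e, let k < 0 be real, and define S({v₁,…,v_l}) via the orderings: for i, j ≠ e, Z(v_i) ⪯ Z(v_j) iff μ_i ≤ μ_j and Z'(v_i) ⪯ Z'(v_j) iff μ_i ≤ μ_j; for i ≠ e, Z(v_i) ⪯ Z(v_e) iff μ_i ≤ -2k, and Z'(v_i) ⪯ Z'(v_e) iff μ_i ≤ 0; furthermore the partial sums behave so that Z'(v₁+⋯+v_i) ⪯ Z'(v_{i+1}+⋯+v_l) iff the weighted average slope of μ₁,…,μ_i is ≤ 0 when e > i, and analogously with ≻ when e ≤ i. Then the coefficient S({v₁,…,v_l}, Z, Z') is nonzero only if 0 < μ₁ ≤ μ₂ ≤ ⋯ ≤ μ_{e-1} ≤ -2k > μ_{e+1} > ⋯ > μ_l ≥ 0, and in that case S = (-1)^{e-1}. -/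
/-!
For `i < e` the sum `v_{i+1} + ⋯ + v_l` contains the rank `-1` class, so the `Z'`-condition at
`i` only asks for the sign of `n₁ + ⋯ + n_i`; for `i ≥ e` it asks for the sign of
`n_{i+1} + ⋯ + n_l`. Along either half, the sign of the next slope `μ` is the sign of the
increment of that partial sum, so once a step is of type (1) (resp. (2)) all later steps of
the half are too. Since `Z(v_e) = -2k > 0`, the half before `e` cannot consist of steps of
type (2), nor the half after `e` of steps of type (1). Hence exactly the `e - 1` steps before
`e` are of type (1), and the slope inequalities are read off the steps.
-/

open scoped Classical

open Finset

/-- With `c = -2k` this is `Z`, with `c = 0` it is `Z'`, on the class `∑_{i ∈ s} v_i`. -/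
noncomputable def classSlope (e : ℕ) (c : ℝ) (nn b : ℕ → ℝ) (s : Finset ℕ) : ℝ :=
  if e ∈ s then c else (∑ i ∈ s, nn i) / ∑ i ∈ s, b i

section classSlope

variable {e : ℕ} {c : ℝ} {nn b : ℕ → ℝ} {s : Finset ℕ}

lemma classSlope_of_mem (h : e ∈ s) : classSlope e c nn b s = c := if_pos h

lemma classSlope_of_notMem (h : e ∉ s) :
    classSlope e c nn b s = (∑ i ∈ s, nn i) / ∑ i ∈ s, b i := if_neg h

lemma classSlope_singleton_self : classSlope e c nn b {e} = c :=
  classSlope_of_mem (mem_singleton_self e)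

lemma classSlope_singleton_of_ne {i : ℕ} (h : i ≠ e) : classSlope e c nn b {i} = nn i / b i := by
  rw [classSlope_of_notMem (by simpa using h.symm), sum_singleton, sum_singleton]

lemma zero_lt_classSlope_iff (he : e ∉ s) (hb : 0 < ∑ i ∈ s, b i) :
    0 < classSlope e c nn b s ↔ 0 < ∑ i ∈ s, nn i := by
  rw [classSlope_of_notMem he, div_pos_iff_of_pos_right hb]

lemma classSlope_lt_zero_iff (he : e ∉ s) (hb : 0 < ∑ i ∈ s, b i) :
    classSlope e c nn b s < 0 ↔ ∑ i ∈ s, nn i < 0 := by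
  rw [classSlope_of_notMem he, div_lt_iff₀ hb, zero_mul]

end classSlope

lemma sum_Icc_pos_of_notMem {l e p q : ℕ} {b : ℕ → ℝ}
    (hb : ∀ i, 1 ≤ i → i ≤ l → i ≠ e → 0 < b i) (hp : 1 ≤ p) (hpq : p ≤ q) (hq : q ≤ l)
    (he : e ∉ Icc p q) : 0 < ∑ i ∈ Icc p q, b i :=
  sum_pos (fun i hi => hb i (by grind) (by grind) (by grind))
    (nonempty_Icc.2 hpq)

lemma forall_le_add_one {P : ℕ → Prop} {n : ℕ} (h : ∀ t, 1 ≤ t → t ≤ n → P t) (hn : P (n + 1)) :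
    ∀ t, 1 ≤ t → t ≤ n + 1 → P t :=
  fun t h1 h2 => (Nat.le_succ_iff.1 h2).elim (h t h1) fun ht => ht ▸ hn

/-- The signs of `w t` and `A t` agree at every step, so the kind of step never changes. -/
theorem forall_ascent_or_forall_descent {n : ℕ} {w A : ℕ → ℝ} (hA0 : A 0 = 0)
    (hsign : ∀ t < n, (0 < w (t + 1) ↔ A t < A (t + 1)))
    (hstep : ∀ t, 1 ≤ t → t ≤ n →
      (w t ≤ w (t + 1) ∧ 0 < A t) ∨ (w (t + 1) < w t ∧ A t ≤ 0)) :
    (∀ t, 1 ≤ t → t ≤ n → (w t ≤ w (t + 1) ∧ 0 < A t) ∧ 0 < w t) ∨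
      (∀ t, 1 ≤ t → t ≤ n → (w (t + 1) < w t ∧ A t ≤ 0) ∧ w t ≤ 0) := by
  induction n with
  | zero => exact Or.inl fun t h1 h2 => by omega
  | succ n ih =>
    have hsign' := hsign n (by omega)
    have hlast := hstep (n + 1) (by omega) le_rfl
    rcases Nat.eq_zero_or_pos n with rfl | hn
    · have hvac {P : ℕ → Prop} : ∀ t, 1 ≤ t → t ≤ 0 → P t := fun t h1 h2 => by omega
      rcases hlast with hP | hQ
      · exact Or.inl (forall_le_add_one hvac ⟨hP, hsign'.2 (hA0 ▸ hP.2)⟩)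
      · exact Or.inr (forall_le_add_one hvac ⟨hQ, not_lt.1 fun h => (hsign'.1 h).not_ge (hA0 ▸ hQ.2)⟩)
    rcases ih (fun t ht => hsign t (by omega)) (fun t h1 h2 => hstep t h1 (by omega)) with hP | hQ
    · obtain ⟨⟨hwn, hAn⟩, hwn_pos⟩ := hP n hn le_rfl
      have hw : 0 < w (n + 1) := hwn_pos.trans_le hwn
      have hA : 0 < A (n + 1) := hAn.trans (hsign'.1 hw)
      exact Or.inl (forall_le_add_one hP ⟨hlast.resolve_right fun h => h.2.not_gt hA, hw⟩)
    · obtain ⟨⟨hwn, hAn⟩, hwn_nonpos⟩ := hQ n hn le_rfl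
      have hw : w (n + 1) ≤ 0 := (hwn.trans_le hwn_nonpos).le
      have hA : A (n + 1) ≤ 0 := (not_lt.1 fun h => hw.not_gt (hsign'.2 h)).trans hAn
      exact Or.inr (forall_le_add_one hQ ⟨hlast.resolve_left fun h => h.2.not_ge hA, hw⟩)

-- Conditions (1) and (2) at position `i` in the definition of `S`.
def stepUp (Z Z' : Finset ℕ → ℝ) (l i : ℕ) : Prop :=
  Z {i} ≤ Z {i + 1} ∧ Z' (Icc (i + 1) l) < Z' (Icc 1 i)

def stepDown (Z Z' : Finset ℕ → ℝ) (l i : ℕ) : Prop :=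
  Z {i + 1} < Z {i} ∧ Z' (Icc 1 i) ≤ Z' (Icc (i + 1) l)

lemma not_stepDown_of_stepUp {Z Z' : Finset ℕ → ℝ} {l i : ℕ} (h : stepUp Z Z' l i) :
    ¬ stepDown Z Z' l i :=
  fun h' => h.1.not_gt h'.1

lemma monotoneOn_of_forall_stepUp {Z Z' : Finset ℕ → ℝ} {l e : ℕ}
    (hup : ∀ i, 1 ≤ i → i < e → stepUp Z Z' l i) : MonotoneOn (fun i => Z {i}) (Set.Icc 1 e) :=
  monotoneOn_of_le_add_one Set.ordConnected_Icc fun i _ hi hi' => (hup i hi.1 hi'.2).1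

lemma strictAntiOn_of_forall_stepDown {Z Z' : Finset ℕ → ℝ} {l e : ℕ}
    (hdown : ∀ i, e ≤ i → i < l → stepDown Z Z' l i) :
    StrictAntiOn (fun i => Z {i}) (Set.Icc e l) :=
  strictAntiOn_of_add_one_lt Set.ordConnected_Icc fun i _ hi hi' => (hdown i hi.1 hi'.2).1

section wallCrossing

variable {l e : ℕ} {c : ℝ} {nn b : ℕ → ℝ}

local notation "Z" => classSlope e c nn b
local notation "Z'" => classSlope e 0 nn b

theorem stepUp_of_lt (hc : 0 < c) (he : e ≤ l) (hb : ∀ i, 1 ≤ i → i ≤ l → i ≠ e → 0 < b i)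
    (hstep : ∀ i, 1 ≤ i → i < e → stepUp Z Z' l i ∨ stepDown Z Z' l i) :
    ∀ i, 1 ≤ i → i < e → stepUp Z Z' l i ∧ 0 < nn i / b i := by
  set w : ℕ → ℝ := fun i => Z {i}
  set A : ℕ → ℝ := fun t => ∑ j ∈ Icc 1 t, nn j
  have key : ∀ i, 1 ≤ i → i < e → (stepUp Z Z' l i ↔ w i ≤ w (i + 1) ∧ 0 < A i) ∧
      (stepDown Z Z' l i ↔ w (i + 1) < w i ∧ A i ≤ 0) := by
    intro i h1 h2
    have hR : Z' (Icc (i + 1) l) = 0 := classSlope_of_mem (by simp; omega)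
    have hL : 0 < Z' (Icc 1 i) ↔ 0 < A i := zero_lt_classSlope_iff (by simp; omega)
      (sum_Icc_pos_of_notMem hb le_rfl h1 (by omega) (by simp; omega))
    exact ⟨and_congr Iff.rfl (by rw [hR, hL]), and_congr Iff.rfl (by rw [hR, ← not_lt, hL, not_lt])⟩
  have hsign : ∀ t < e - 1, (0 < w (t + 1) ↔ A t < A (t + 1)) := by
    intro t ht
    simp only [w, A, classSlope_singleton_of_ne (show t + 1 ≠ e by omega),
      sum_Icc_succ_top (show 1 ≤ t + 1 by omega), lt_add_iff_pos_right]
    exact div_pos_iff_of_pos_right (hb _ (by omega) (by omega) (by omega))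
  intro i h1 h2
  rcases forall_ascent_or_forall_descent (by simp [A]) hsign fun t h1 h2 =>
    (hstep t h1 (by omega)).imp (key t h1 (by omega)).1.1 (key t h1 (by omega)).2.1 with hP | hQ
  · refine ⟨(key i h1 h2).1.2 (hP i h1 (by omega)).1, ?_⟩
    simpa [w, classSlope_singleton_of_ne (show i ≠ e by omega)] using (hP i h1 (by omega)).2
  · have hlast := hQ (e - 1) (by omega) le_rfl
    simp only [w, Nat.sub_add_cancel (show 1 ≤ e by omega), classSlope_singleton_self] at hlast
    linarith [hlast.1.1, hlast.2]

/-- Read from the right, with all slopes negated, this is the situation of `stepUp_of_lt`. -/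
theorem stepDown_of_le (hc : 0 < c) (he : 1 ≤ e) (hb : ∀ i, 1 ≤ i → i ≤ l → i ≠ e → 0 < b i)
    (hstep : ∀ i, e ≤ i → i < l → stepUp Z Z' l i ∨ stepDown Z Z' l i) :
    ∀ i, e ≤ i → i < l → stepDown Z Z' l i ∧ 0 ≤ nn (i + 1) / b (i + 1) := by
  set w : ℕ → ℝ := fun t => -Z {l + 1 - t}
  set A : ℕ → ℝ := fun t => -∑ j ∈ Icc (l + 1 - t) l, nn j
  have key : ∀ t, 1 ≤ t → t ≤ l - e → (stepUp Z Z' l (l - t) ↔ w t ≤ w (t + 1) ∧ 0 < A t) ∧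
      (stepDown Z Z' l (l - t) ↔ w (t + 1) < w t ∧ A t ≤ 0) := by
    intro t h1 h2
    have hidx : l - t + 1 = l + 1 - t := by omega
    have hL : Z' (Icc 1 (l - t)) = 0 := classSlope_of_mem (by simp; omega)
    have hR : Z' (Icc (l + 1 - t) l) < 0 ↔ 0 < A t :=
      (classSlope_lt_zero_iff (by simp; omega)
        (sum_Icc_pos_of_notMem hb (by omega) (by omega) le_rfl (by simp; omega))).trans
        neg_pos.symm
    simp only [stepUp, stepDown, w, hidx, hL, Nat.reduceSubDiff]
    exact ⟨and_congr neg_le_neg_iff.symm hR,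
      and_congr neg_lt_neg_iff.symm (by rw [← not_lt, hR, not_lt])⟩
  have hsign : ∀ t < l - e, (0 < w (t + 1) ↔ A t < A (t + 1)) := by
    intro t ht
    have hsum : ∑ j ∈ Icc (l - t) l, nn j = nn (l - t) + ∑ j ∈ Icc (l + 1 - t) l, nn j := by
      rw [← insert_Icc_add_one_left_eq_Icc (show l - t ≤ l by omega), sum_insert (by simp),
        show l - t + 1 = l + 1 - t by omega]
    simp only [w, A, Nat.reduceSubDiff, hsum, classSlope_singleton_of_ne (show l - t ≠ e by omega),
      neg_pos, neg_add, lt_add_iff_pos_left]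
    rw [div_lt_iff₀ (hb _ (by omega) (by omega) (by omega)), zero_mul]
  intro i h1 h2
  rcases forall_ascent_or_forall_descent (by simp [A]) hsign fun t h1 h2 =>
    (hstep (l - t) (by omega) (by omega)).imp (key t h1 h2).1.1 (key t h1 h2).2.1 with hP | hQ
  · have hlast := hP (l - e) (by omega) le_rfl
    simp only [w, show l + 1 - (l - e + 1) = e by omega, classSlope_singleton_self] at hlast
    linarith [hlast.1.1, hlast.2]
  · have hi := key (l - i) (by omega) (by omega)
    have hQi := hQ (l - i) (by omega) (by omega)
    rw [Nat.sub_sub_self h2.le] at hi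
    refine ⟨hi.2.2 hQi.1, ?_⟩
    simpa [w, show l + 1 - (l - i) = i + 1 by omega,
      classSlope_singleton_of_ne (show i + 1 ≠ e by omega)] using hQi.2

end wallCrossing

lemma card_filter_stepUp {Z Z' : Finset ℕ → ℝ} {l e : ℕ} (he : e ≤ l)
    (hup : ∀ i, 1 ≤ i → i < e → stepUp Z Z' l i)
    (hdown : ∀ i, e ≤ i → i < l → stepDown Z Z' l i) :
    ((Icc 1 (l - 1)).filter (stepUp Z Z' l)).card = e - 1 := by
  suffices (Icc 1 (l - 1)).filter (stepUp Z Z' l) = Icc 1 (e - 1) by simp [this]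
  ext i
  simp only [mem_filter, mem_Icc]
  constructor
  · rintro ⟨⟨h1, h2⟩, h⟩
    by_contra h'
    exact not_stepDown_of_stepUp h (hdown i (by omega) (by omega))
  · rintro ⟨h1, h2⟩
    exact ⟨⟨h1, by omega⟩, hup i h1 (by omega)⟩

theorem stmt_13_general (l e : ℕ) (he1 : 1 ≤ e) (he2 : e ≤ l)
    (k : ℝ) (hk : k < 0) (b nn : ℕ → ℝ)
    (hb : ∀ i, 1 ≤ i → i ≤ l → i ≠ e → 0 < b i) :
    let μ : ℕ → ℝ := fun i => nn i / b i
    let slopeZ : Finset ℕ → ℝ := fun s =>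
      if e ∈ s then -2 * k else (∑ i ∈ s, nn i) / (∑ i ∈ s, b i)
    let slopeZ' : Finset ℕ → ℝ := fun s =>
      if e ∈ s then 0 else (∑ i ∈ s, nn i) / (∑ i ∈ s, b i)
    -- condition (1): Z(v_i) ⪯ Z(v_{i+1}) and Z'(v₁+⋯+v_i) ≻ Z'(v_{i+1}+⋯+v_l)
    let cond1 : ℕ → Prop := fun i =>
      slopeZ {i} ≤ slopeZ {i + 1} ∧
        slopeZ' (Finset.Icc (i + 1) l) < slopeZ' (Finset.Icc 1 i)
    -- condition (2): Z(v_i) ≻ Z(v_{i+1}) and Z'(v₁+⋯+v_i) ⪯ Z'(v_{i+1}+⋯+v_l)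
    let cond2 : ℕ → Prop := fun i =>
      slopeZ {i + 1} < slopeZ {i} ∧
        slopeZ' (Finset.Icc 1 i) ≤ slopeZ' (Finset.Icc (i + 1) l)
    let S : ℝ :=
      if ∀ i, 1 ≤ i → i ≤ l - 1 → cond1 i ∨ cond2 i then
        (-1 : ℝ) ^ ((Finset.Icc 1 (l - 1)).filter cond1).card
      else 0
    S ≠ 0 →
      ((∀ i, 1 ≤ i → i < e → 0 < μ i) ∧
       (∀ i, 1 ≤ i → i + 1 < e → μ i ≤ μ (i + 1)) ∧
       (∀ i, 1 ≤ i → i < e → μ i ≤ -2 * k) ∧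
       (∀ i, e < i → i + 1 ≤ l → μ (i + 1) < μ i) ∧
       (∀ i, e < i → i ≤ l → μ i < -2 * k ∧ 0 ≤ μ i)) ∧
      S = (-1 : ℝ) ^ (e - 1) := by
  intro μ Z Z' cond1 cond2 S hS
  have hc : 0 < -2 * k := by linarith
  have hall : ∀ i, 1 ≤ i → i ≤ l - 1 → cond1 i ∨ cond2 i := by
    by_contra h
    exact hS (if_neg h)
  have hup := stepUp_of_lt hc he2 hb fun i h1 h2 => hall i h1 (by omega)
  have hdown := stepDown_of_le hc he1 hb fun i h1 h2 => hall i (by omega) (by omega)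
  have hZ : ∀ i, i ≠ e → Z {i} = μ i := fun i hi => classSlope_singleton_of_ne hi
  have hZe : Z {e} = -2 * k := classSlope_singleton_self
  have hmono := monotoneOn_of_forall_stepUp fun i h1 h2 => (hup i h1 h2).1
  have hanti := strictAntiOn_of_forall_stepDown fun i h1 h2 => (hdown i h1 h2).1
  refine ⟨⟨fun i h1 h2 => (hup i h1 h2).2, fun i h1 h2 => ?_, fun i h1 h2 => ?_,
    fun i h1 h2 => ?_, fun i h1 h2 => ⟨?_, ?_⟩⟩, ?_⟩
  · rw [← hZ i (by omega), ← hZ (i + 1) (by omega)]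
    exact (hup i h1 (by omega)).1.1
  · rw [← hZ i (by omega), ← hZe]
    exact hmono ⟨h1, by omega⟩ ⟨he1, le_rfl⟩ h2.le
  · rw [← hZ i (by omega), ← hZ (i + 1) (by omega)]
    exact (hdown i h1.le (by omega)).1.1
  · rw [← hZ i (by omega), ← hZe]
    exact hanti ⟨le_rfl, he2⟩ ⟨h1.le, h2⟩ h1
  · have := (hdown (i - 1) (by omega) (by omega)).2
    rwa [Nat.sub_add_cancel (by omega)] at this
  · refine (if_pos hall).trans (congrArg _ ?_)
    convert card_filter_stepUp he2 (fun i h1 h2 => (hup i h1 h2).1) fun i h1 h2 =>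
      (hdown i h1 h2).1 with i
    exact Iff.rfl

/-- Lemma (unless2) of Toda's paper, abstract version. Classes are indexed `1,…,l`
with a distinguished index `e` (the rank `-1` class); pure classes `i ≠ e` have weights
`b i = ω·β_i > 0` and `nn i = n_i`, with slopes `μ i = nn i / b i`. The `Z`-slope of a
subset containing `e` is `-2k` and its `Z'`-slope is `0`; a pure subset has slope given
by the weighted average. Then the coefficient `S({v₁,…,v_l}, Z, Z')` is nonzero only
if `0 < μ₁ ≤ … ≤ μ_{e-1} ≤ -2k > μ_{e+1} > … > μ_l ≥ 0`, in which case
`S = (-1)^{e-1}`. -/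
theorem stmt_13 (l e : ℕ) (hl : 1 ≤ l) (he1 : 1 ≤ e) (he2 : e ≤ l)
    (k : ℝ) (hk : k < 0) (b nn : ℕ → ℝ)
    (hb : ∀ i, 1 ≤ i → i ≤ l → i ≠ e → 0 < b i) :
    let μ : ℕ → ℝ := fun i => nn i / b i
    let slopeZ : Finset ℕ → ℝ := fun s =>
      if e ∈ s then -2 * k else (∑ i ∈ s, nn i) / (∑ i ∈ s, b i)
    let slopeZ' : Finset ℕ → ℝ := fun s =>
      if e ∈ s then 0 else (∑ i ∈ s, nn i) / (∑ i ∈ s, b i)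
    -- condition (1): Z(v_i) ⪯ Z(v_{i+1}) and Z'(v₁+⋯+v_i) ≻ Z'(v_{i+1}+⋯+v_l)
    let cond1 : ℕ → Prop := fun i =>
      slopeZ {i} ≤ slopeZ {i + 1} ∧
        slopeZ' (Finset.Icc (i + 1) l) < slopeZ' (Finset.Icc 1 i)
    -- condition (2): Z(v_i) ≻ Z(v_{i+1}) and Z'(v₁+⋯+v_i) ⪯ Z'(v_{i+1}+⋯+v_l)
    let cond2 : ℕ → Prop := fun i =>
      slopeZ {i + 1} < slopeZ {i} ∧
        slopeZ' (Finset.Icc 1 i) ≤ slopeZ' (Finset.Icc (i + 1) l)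
    let S : ℝ :=
      if ∀ i, 1 ≤ i → i ≤ l - 1 → cond1 i ∨ cond2 i then
        (-1 : ℝ) ^ ((Finset.Icc 1 (l - 1)).filter cond1).card
      else 0
    S ≠ 0 →
      ((∀ i, 1 ≤ i → i < e → 0 < μ i) ∧
       (∀ i, 1 ≤ i → i + 1 < e → μ i ≤ μ (i + 1)) ∧
       (∀ i, 1 ≤ i → i < e → μ i ≤ -2 * k) ∧
       (∀ i, e < i → i + 1 ≤ l → μ (i + 1) < μ i) ∧
       (∀ i, e < i → i ≤ l → μ i < -2 * k ∧ 0 ≤ μ i)) ∧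
      S = (-1 : ℝ) ^ (e - 1) :=
  stmt_13_general l e he1 he2 k hk b nn hb
end
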